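/- arXiv:2308.12869 — 2 statements merged into one kernel-verified Lean document; each statement's English description precedes it below -/
import Mathlib

section
/- In the lattice ℤ³ with Gram matrix [[2k,1,1],[1,−2,0],[1,0,−2]] (k ≥ 0 an integer), there is no vector σ = x₁b₁ + x₂b₂ + x₃b₃ with self-intersection −2 such that x₁ is even and x₂ ≡ x₃ (mod 2). -/
/-- In the lattice `ℤ³` with Gram matrix `[[2k,1,1],[1,−2,0],[1,0,−2]]` (`k ≥ 0`), there is no
vector `σ = (x₁,x₂,x₃)` of self-intersection `−2` with `x₁` even and `x₂ ≡ x₃ (mod 2)`. -/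
theorem no_div_two_class_in_special_NS (k : ℤ) (hk : 0 ≤ k) :
    ¬ ∃ x₁ x₂ x₃ : ℤ,
      2 * k * x₁ ^ 2 - 2 * x₂ ^ 2 - 2 * x₃ ^ 2 + 2 * x₁ * x₂ + 2 * x₁ * x₃ = -2 ∧
      Even x₁ ∧ x₂ % 2 = x₃ % 2 := by
  rintro ⟨x₁, x₂, x₃, h, he, hp⟩
  have h2 : k * x₁ ^ 2 - x₂ ^ 2 - x₃ ^ 2 + x₁ * x₂ + x₁ * x₃ = -1 := by linarith
  have hc : ((k * x₁ ^ 2 - x₂ ^ 2 - x₃ ^ 2 + x₁ * x₂ + x₁ * x₃ : ℤ) : ZMod 2)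
      = ((-1 : ℤ) : ZMod 2) := by exact_mod_cast congrArg _ h2
  push_cast at hc
  have h1 : (x₁ : ZMod 2) = 0 := by
    obtain ⟨a, rfl⟩ := he
    push_cast
    ring_nf
    simp [show (2 : ZMod 2) = 0 from rfl]
  have h23 : (x₂ : ZMod 2) = (x₃ : ZMod 2) :=
    (ZMod.intCast_eq_intCast_iff _ _ _).mpr hp
  rw [h1, h23] at hc
  have hsq : (x₃ : ZMod 2) ^ 2 = (x₃ : ZMod 2) := by
    have : ∀ y : ZMod 2, y ^ 2 = y := by decide
    exact this _
  rw [hsq] at hc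
  ring_nf at hc
  simp [show (2 : ZMod 2) = 0 from rfl] at hc
end

section
/- In the lattice ℤ⁴ with Gram matrix [[−2k², 1−2k, 0, 0],[1−2k, −2, 0, 0],[0, 0, −2h², 1+2h],[0, 0, 1+2h, −2]] (h, k integers), there is no vector of self-intersection −2 all of whose pairings with lattice vectors are divisible by 2. -/
open Matrix

/-- In `ℤ⁴` with Gram matrix
`[[−2k²,1−2k,0,0],[1−2k,−2,0,0],[0,0,−2h²,1+2h],[0,0,1+2h,−2]]` there is no vector of
self-intersection `−2` all of whose pairings with lattice vectors are divisible by `2`. -/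
theorem no_square_neg_two_div_two_case_gamma_one (h k : ℤ) :
    ¬ ∃ v : Fin 4 → ℤ,
      v ⬝ᵥ (!![-2*k^2, 1-2*k, 0, 0; 1-2*k, -2, 0, 0;
              0, 0, -2*h^2, 1+2*h; 0, 0, 1+2*h, -2]).mulVec v = -2 ∧
      ∀ w : Fin 4 → ℤ,
        (2 : ℤ) ∣ v ⬝ᵥ (!![-2*k^2, 1-2*k, 0, 0; 1-2*k, -2, 0, 0;
              0, 0, -2*h^2, 1+2*h; 0, 0, 1+2*h, -2]).mulVec w := by
  rintro ⟨v, hv, hdiv⟩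
  have h0 := hdiv (fun i => if i = 0 then 1 else 0)
  have h1 := hdiv (fun i => if i = 1 then 1 else 0)
  have h2 := hdiv (fun i => if i = 2 then 1 else 0)
  have h3 := hdiv (fun i => if i = 3 then 1 else 0)
  simp [dotProduct, mulVec, Fin.sum_univ_four, Matrix.vecHead, Matrix.vecTail] at h0 h1 h2 h3 hv
  obtain ⟨a, ha⟩ := h0
  obtain ⟨b, hb⟩ := h1
  obtain ⟨c, hc⟩ := h2
  obtain ⟨d, hd⟩ := h3
  -- v1 and v0 even
  have e1 : 2 ∣ v 1 := ⟨a + k^2 * v 0 + k * v 1, by linarith⟩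
  have e0 : 2 ∣ v 0 := ⟨b + k * v 0 + v 1, by linarith⟩
  have e3 : 2 ∣ v 3 := ⟨c + h^2 * v 2 - h * v 3, by linarith⟩
  have e2 : 2 ∣ v 2 := ⟨d - h * v 2 + v 3, by linarith⟩
  obtain ⟨x, hx⟩ := e0
  obtain ⟨y, hy⟩ := e1
  obtain ⟨z, hz⟩ := e2
  obtain ⟨w, hw⟩ := e3
  rw [hx, hy, hz, hw] at hv
  have : (4 : ℤ) ∣ -2 := ⟨-2*k^2*x^2 + 2*(1-2*k)*x*y - 2*y^2 - 2*h^2*z^2 + 2*(1+2*h)*z*w - 2*w^2,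
    by linear_combination -hv⟩
  omega
end
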